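/- In a dual weak brace S, for all a, b, c ∈ S, a · (b + c) = a · b + b + a · c - b, where a · b := -a + a ∘ b - b. -/

import Mathlib

/-- A weak brace: `(S,+)` and `(S,∘)` are inverse semigroups satisfying
`a ∘ (b + c) = a ∘ b - a + a ∘ c` and `a ∘ a⁻ = -a + a`. -/
class WeakBrace (S : Type*) where
  add : S → S → S
  mul : S → S → S
  neg : S → S
  inv : S → S
  add_assoc : ∀ a b c : S, add (add a b) c = add a (add b c)
  mul_assoc : ∀ a b c : S, mul (mul a b) c = mul a (mul b c)
  add_reg : ∀ a : S, add (add a (neg a)) a = a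
  neg_reg : ∀ a : S, add (add (neg a) a) (neg a) = neg a
  neg_unique : ∀ a x : S, add (add a x) a = a → add (add x a) x = x → x = neg a
  mul_reg : ∀ a : S, mul (mul a (inv a)) a = a
  inv_reg : ∀ a : S, mul (mul (inv a) a) (inv a) = inv a
  inv_unique : ∀ a x : S, mul (mul a x) a = a → mul (mul x a) x = x → x = inv a
  distrib : ∀ a b c : S, mul a (add b c) = add (add (mul a b) (neg a)) (mul a c)
  link : ∀ a : S, mul a (inv a) = add (neg a) a

/-- A dual weak brace: a weak brace whose multiplicative semigroup is Clifford. -/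
class DualWeakBrace (S : Type*) extends WeakBrace S where
  clifford : ∀ a : S, WeakBrace.mul a (WeakBrace.inv a) = WeakBrace.mul (WeakBrace.inv a) a

namespace WeakBrace

variable {S : Type*} [WeakBrace S]

/-- `λ_a(b) = -a + a ∘ b`. -/
def lam (a b : S) : S := add (neg a) (mul a b)

/-- `ρ_b(a) = (-a + a ∘ b)⁻ ∘ a ∘ b`. -/
def rho (b a : S) : S := mul (mul (inv (lam a b)) a) b

/-- `a · b = -a + a ∘ b - b`. -/
def cdot (a b : S) : S := add (add (neg a) (mul a b)) (neg b)

/-- `a⁰ = a - a`. -/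
def sq (a : S) : S := add a (neg a)

/-- Additive idempotent (the sets of idempotents of `+` and `∘` coincide). -/
def IsIdem (e : S) : Prop := add e e = e

/-- `[a,b]₊ = -a - b + a + b`. -/
def brkt (a b : S) : S := add (add (add (neg a) (neg b)) a) b

/-- `I` is a full inverse subsemigroup of `(S,+)`. -/
def IsFullAddSub (I : Set S) : Prop :=
  (∀ e : S, IsIdem e → e ∈ I) ∧ (∀ x ∈ I, ∀ y ∈ I, add x y ∈ I) ∧ (∀ x ∈ I, neg x ∈ I)

/-- `I` is a normal subsemigroup of `(S,+)`. -/
def IsNormalAdd (I : Set S) : Prop :=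
  IsFullAddSub I ∧ ∀ a : S, ∀ x ∈ I, add (add (neg a) x) a ∈ I

/-- `I` is a normal subsemigroup of `(S,∘)`. -/
def IsNormalMul (I : Set S) : Prop :=
  (∀ e : S, IsIdem e → e ∈ I) ∧ (∀ x ∈ I, ∀ y ∈ I, mul x y ∈ I) ∧ (∀ x ∈ I, inv x ∈ I) ∧
    ∀ a : S, ∀ x ∈ I, mul (mul (inv a) x) a ∈ I

/-- `I` is a left ideal of the weak brace `S`. -/
def IsLeftIdeal (I : Set S) : Prop :=
  IsFullAddSub I ∧ ∀ a : S, ∀ x ∈ I, lam a x ∈ I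

/-- `I` is an ideal of the weak brace `S`. -/
def IsIdeal (I : Set S) : Prop :=
  IsNormalAdd I ∧ (∀ a : S, ∀ x ∈ I, lam a x ∈ I) ∧ IsNormalMul I

/-- The socle `Soc(S)`. -/
def Soc (S : Type*) [WeakBrace S] : Set S :=
  {a | ∀ b : S, add a b = mul a b ∧ add a b = add b a}

/-- The annihilator `Ann(S)`. -/
def Ann (S : Type*) [WeakBrace S] : Set S :=
  {a | ∀ b : S, add a b = add b a ∧ add a b = mul a b ∧ mul a b = mul b a}

/-- The congruence `a ∼_I b ⟺ a⁰ = b⁰ and -a + b ∈ I` associated to an ideal `I`. -/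
def simI (I : Set S) (a b : S) : Prop := sq a = sq b ∧ add (neg a) b ∈ I

/-- Membership in the inverse subsemigroup of `(S,+)` generated by a set `X`. -/
inductive genAdd (X : Set S) : S → Prop
  | base : ∀ x ∈ X, genAdd X x
  | add : ∀ a b : S, genAdd X a → genAdd X b → genAdd X (add a b)
  | neg : ∀ a : S, genAdd X a → genAdd X (neg a)

/-- `X · Y`: the additive inverse subsemigroup generated by the elements `x · y`. -/
def cdotSet (X Y : Set S) : Set S :=
  {s | genAdd {z | ∃ x ∈ X, ∃ y ∈ Y, z = cdot x y} s}

/-- `S^(n)` for `n ≥ 1`: `S^(1) = S`, `S^(n+1) = S^(n) · S`. -/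
def Spow (S : Type*) [WeakBrace S] : ℕ → Set S
  | 0 => Set.univ
  | 1 => Set.univ
  | (n+2) => cdotSet (Spow S (n+1)) Set.univ

end WeakBrace

/-!
Expanding both sides with `a ∘ (b + c) = a ∘ b - a + a ∘ c` and `-(b + c) = -c - b`, the identity
reduces to `a ∘ b + (-b + b) = a ∘ b`. Since `-x + x` is the idempotent `x ∘ x⁻`, it suffices that
`b ∘ b⁻` absorbs `-(a ∘ b) + a ∘ b = (a ∘ b) ∘ (a ∘ b)⁻`. In a Clifford semigroup idempotents are
central, so the latter equals `(b ∘ b⁻) ∘ (a ∘ a⁻)`, and for idempotents `e, g` the brace axiom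
`e ∘ (g + g) = e ∘ g - e + e ∘ g` together with `E(S,+) = E(S,∘)` gives `e ∘ g + e = e ∘ g`.
-/

structure IsInverseSemigroup {S : Type*} (op : S → S → S) (inv : S → S) : Prop where
  assoc : ∀ a b c : S, op (op a b) c = op a (op b c)
  op_inv_op : ∀ a : S, op (op a (inv a)) a = a
  inv_op_inv : ∀ a : S, op (op (inv a) a) (inv a) = inv a
  eq_inv_of : ∀ a x : S, op (op a x) a = a → op (op x a) x = x → x = inv a

namespace IsInverseSemigroup

variable {S : Type*} {op : S → S → S} {inv : S → S}

local infixl:70 " ⋆ " => op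

theorem inv_eq_self_of_idem (h : IsInverseSemigroup op inv) {e : S} (he : e ⋆ e = e) :
    inv e = e :=
  (h.eq_inv_of e e (by rw [he, he]) (by rw [he, he])).symm

theorem op_inv_idem (h : IsInverseSemigroup op inv) (x : S) :
    x ⋆ inv x ⋆ (x ⋆ inv x) = x ⋆ inv x := by
  rw [← h.assoc, h.op_inv_op]

theorem inv_op_idem (h : IsInverseSemigroup op inv) (x : S) :
    inv x ⋆ x ⋆ (inv x ⋆ x) = inv x ⋆ x := by
  rw [← h.assoc, h.inv_op_inv]

theorem idem_op_idem (h : IsInverseSemigroup op inv) {e f : S} (he : e ⋆ e = e)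
    (hf : f ⋆ f = f) : e ⋆ f ⋆ (e ⋆ f) = e ⋆ f := by
  set x := inv (e ⋆ f)
  have hx : x ⋆ (e ⋆ f) ⋆ x = x := h.inv_op_inv _
  -- `f ⋆ x ⋆ e` is also an inverse of `e ⋆ f`, hence equal to `x`
  have hfxe : f ⋆ x ⋆ e = x := by
    refine h.eq_inv_of _ _ ?_ ?_
    · calc e ⋆ f ⋆ (f ⋆ x ⋆ e) ⋆ (e ⋆ f) = e ⋆ f ⋆ x ⋆ (e ⋆ f) := by
            simp only [h.assoc, ← h.assoc f f, ← h.assoc e e, he, hf]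
        _ = e ⋆ f := h.op_inv_op _
    · calc f ⋆ x ⋆ e ⋆ (e ⋆ f) ⋆ (f ⋆ x ⋆ e) = f ⋆ (x ⋆ (e ⋆ f) ⋆ x) ⋆ e := by
            simp only [h.assoc, ← h.assoc f f, ← h.assoc e e, he, hf]
        _ = f ⋆ x ⋆ e := by rw [hx]
  have hxx : x ⋆ x = x := by
    calc x ⋆ x = f ⋆ (x ⋆ (e ⋆ f) ⋆ x) ⋆ e := by
          conv_lhs => rw [← hfxe]
          simp only [h.assoc]
      _ = x := by rw [hx, hfxe]
  have hefx : e ⋆ f = x := by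
    rw [h.eq_inv_of x (e ⋆ f) hx (h.op_inv_op _), h.inv_eq_self_of_idem hxx]
  rw [hefx, hxx]

theorem idem_comm (h : IsInverseSemigroup op inv) {e f : S} (he : e ⋆ e = e)
    (hf : f ⋆ f = f) : e ⋆ f = f ⋆ e := by
  -- `f ⋆ e` is an inverse of the idempotent `e ⋆ f`, which is its own inverse
  have hinv : f ⋆ e = inv (e ⋆ f) := by
    refine h.eq_inv_of _ _ ?_ ?_
    · calc e ⋆ f ⋆ (f ⋆ e) ⋆ (e ⋆ f) = e ⋆ f ⋆ (e ⋆ f) := by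
            simp only [h.assoc, ← h.assoc f f, ← h.assoc e e, he, hf]
        _ = e ⋆ f := h.idem_op_idem he hf
    · calc f ⋆ e ⋆ (e ⋆ f) ⋆ (f ⋆ e) = f ⋆ e ⋆ (f ⋆ e) := by
            simp only [h.assoc, ← h.assoc f f, ← h.assoc e e, he, hf]
        _ = f ⋆ e := h.idem_op_idem hf he
  rw [hinv, h.inv_eq_self_of_idem (h.idem_op_idem he hf)]

theorem inv_op (h : IsInverseSemigroup op inv) (a b : S) : inv (a ⋆ b) = inv b ⋆ inv a := by
  have hcomm := h.idem_comm (h.op_inv_idem b) (h.inv_op_idem a)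
  refine (h.eq_inv_of _ _ ?_ ?_).symm
  · calc a ⋆ b ⋆ (inv b ⋆ inv a) ⋆ (a ⋆ b) = a ⋆ (b ⋆ inv b ⋆ (inv a ⋆ a)) ⋆ b := by
          simp only [h.assoc]
      _ = a ⋆ inv a ⋆ a ⋆ (b ⋆ inv b ⋆ b) := by rw [hcomm]; simp only [h.assoc]
      _ = a ⋆ b := by rw [h.op_inv_op, h.op_inv_op]
  · calc inv b ⋆ inv a ⋆ (a ⋆ b) ⋆ (inv b ⋆ inv a)
          = inv b ⋆ (inv a ⋆ a ⋆ (b ⋆ inv b)) ⋆ inv a := by simp only [h.assoc]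
      _ = inv b ⋆ b ⋆ inv b ⋆ (inv a ⋆ a ⋆ inv a) := by rw [← hcomm]; simp only [h.assoc]
      _ = inv b ⋆ inv a := by rw [h.inv_op_inv, h.inv_op_inv]

theorem op_eq_left_of_inv_op_op_eq (h : IsInverseSemigroup op inv) {x f : S}
    (hf : inv x ⋆ x ⋆ f = inv x ⋆ x) : x ⋆ f = x := by
  calc x ⋆ f = x ⋆ (inv x ⋆ x ⋆ f) := by rw [← h.assoc, ← h.assoc, h.op_inv_op]
    _ = x := by rw [hf, ← h.assoc, h.op_inv_op]

theorem idem_central_of_clifford (h : IsInverseSemigroup op inv)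
    (hC : ∀ a : S, a ⋆ inv a = inv a ⋆ a) {e : S} (he : e ⋆ e = e) (x : S) :
    e ⋆ x = x ⋆ e := by
  have hcomm := h.idem_comm he (h.op_inv_idem x)
  have hconj : inv x ⋆ (e ⋆ x) = x ⋆ inv x ⋆ e := by
    have h0 := hC (e ⋆ x)
    rw [h.inv_op, h.inv_eq_self_of_idem he] at h0
    calc inv x ⋆ (e ⋆ x) = inv x ⋆ e ⋆ (e ⋆ x) := by rw [h.assoc (inv x) e, ← h.assoc e e, he]
      _ = e ⋆ x ⋆ (inv x ⋆ e) := h0.symm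
      _ = e ⋆ (x ⋆ inv x) ⋆ e := by simp only [h.assoc]
      _ = x ⋆ inv x ⋆ e := by rw [hcomm, h.assoc (x ⋆ inv x) e e, he]
  calc e ⋆ x = e ⋆ (x ⋆ inv x) ⋆ x := by rw [h.assoc e, h.op_inv_op]
    _ = x ⋆ (inv x ⋆ (e ⋆ x)) := by rw [hcomm]; simp only [h.assoc]
    _ = x ⋆ (inv x ⋆ x) ⋆ e := by rw [hconj, ← hC x, ← h.assoc, ← h.assoc]
    _ = x ⋆ e := by rw [← h.assoc, h.op_inv_op]

end IsInverseSemigroup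

namespace WeakBrace

section

variable {S : Type*} [WeakBrace S]

theorem isInverseSemigroup_add : IsInverseSemigroup (add : S → S → S) neg :=
  ⟨add_assoc, add_reg, neg_reg, neg_unique⟩

theorem isInverseSemigroup_mul : IsInverseSemigroup (mul : S → S → S) inv :=
  ⟨mul_assoc, mul_reg, inv_reg, inv_unique⟩

theorem add_self_of_mul_self {e : S} (he : mul e e = e) : add e e = e := by
  have hl := link e
  rw [isInverseSemigroup_mul.inv_eq_self_of_idem he, he] at hl
  nth_rewrite 2 [hl]
  rw [← add_assoc, add_reg]

theorem mul_add_left_eq_of_mul_self {e g : S} (he : mul e e = e) (hg : mul g g = g) :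
    add (mul e g) e = mul e g := by
  have he' := add_self_of_mul_self he
  have heg' := add_self_of_mul_self (isInverseSemigroup_mul.idem_op_idem he hg)
  have hcomm := isInverseSemigroup_add.idem_comm he' heg'
  have hdist : mul e g = add (add (mul e g) e) (mul e g) := by
    simpa only [add_self_of_mul_self hg, isInverseSemigroup_add.inv_eq_self_of_idem he']
      using distrib e g g
  calc add (mul e g) e = add (mul e g) (add (mul e g) e) := by rw [← add_assoc, heg']
    _ = mul e g := by rw [← hcomm, ← add_assoc, ← hdist]

end

section

variable {S : Type*} [DualWeakBrace S]

theorem mul_comm_of_mul_self {e : S} (he : mul e e = e) (x : S) : mul e x = mul x e :=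
  isInverseSemigroup_mul.idem_central_of_clifford DualWeakBrace.clifford he x

theorem neg_add_self_mul (a b : S) :
    add (neg (mul a b)) (mul a b) = mul (mul b (inv b)) (mul a (inv a)) := by
  have ha := isInverseSemigroup_mul.op_inv_idem a
  have hb := isInverseSemigroup_mul.op_inv_idem b
  rw [← link, isInverseSemigroup_mul.inv_op]
  calc mul (mul a b) (mul (inv b) (inv a)) = mul a (mul (mul b (inv b)) (inv a)) := by
        simp only [mul_assoc]
    _ = mul (mul a (inv a)) (mul b (inv b)) := by rw [mul_comm_of_mul_self hb, mul_assoc]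
    _ = mul (mul b (inv b)) (mul a (inv a)) := mul_comm_of_mul_self ha _

theorem mul_add_neg_add_self (a b : S) : add (mul a b) (add (neg b) b) = mul a b := by
  refine isInverseSemigroup_add.op_eq_left_of_inv_op_op_eq ?_
  rw [neg_add_self_mul, ← link]
  exact mul_add_left_eq_of_mul_self (isInverseSemigroup_mul.op_inv_idem b)
    (isInverseSemigroup_mul.op_inv_idem a)

end

end WeakBrace

open WeakBrace
theorem stmt5 {S : Type*} [DualWeakBrace S] (a b c : S) :
    cdot a (add b c) = add (add (add (cdot a b) b) (cdot a c)) (neg b) := by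
  have absorb : ∀ y : S, add (mul a b) (add (neg b) (add b y)) = add (mul a b) y := fun y => by
    rw [← WeakBrace.add_assoc (neg b), ← WeakBrace.add_assoc, mul_add_neg_add_self]
  simp only [cdot, distrib, isInverseSemigroup_add.inv_op, WeakBrace.add_assoc, absorb]
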